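/- Let A ∈ ℝ^{m×n}, b ∈ ℝ^m with Ax = b consistent, B ∈ ℝ^{n×n} symmetric positive definite, Q ∈ ℝ^{d×m}, P := I − (Q A B^{−1/2})† Q A B^{−1/2}, and x* the minimizer of ||x − x^0||_B over {x : Ax = b}, where x^0 satisfies QAx^0 = Qb. Let S be a random sketching matrix drawn from a finitely supported distribution D, with Z := P B^{−1/2} Aᵀ Sᵀ (S A B^{−1/2} P B^{−1/2} Aᵀ Sᵀ)† S A B^{−1/2} P, and assume the exactness condition null(E[Z]) = null(A B^{−1/2} P). Then the subspace-constrained sketch-and-project iterates {x^k}, generated with an independent fresh draw of S each iteration, satisfy E||x^k − x*||_B² ≤ (1 − λmin⁺(E[Z]))^k · ||x^0 − x*||_B², where λmin⁺(E[Z]) denotes the smallest nonzero eigenvalue of E[Z]. -/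

import Mathlib

/-!
Measure errors in whitened coordinates `e = R (x - x*)` with `R = B^{1/2}`, so that
`‖x - x*‖_B = ‖e‖`. A step is the `B`-orthogonal projection of `x` onto an affine subspace
containing `x*`, hence `‖e‖² = ‖e⁺‖² + ‖e - e⁺‖²`. The matrix `Z_S` is an orthogonal projector
that annihilates `e⁺`, so `eᵀ Z_S e = ‖Z_S (e - e⁺)‖² ≤ ‖e - e⁺‖²`, and averaging over `S` gives
`E ‖e⁺‖² ≤ ‖e‖² - eᵀ E[Z] e`.

Since `x*` is the `B`-closest solution to `x⁰` and every step moves `B`-orthogonally to `ker A`,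
the error `x - x*` stays `B`-orthogonal to `ker A`. With the exactness condition this makes `e`
orthogonal to `ker E[Z]`, where `eᵀ E[Z] e ≥ λmin⁺(E[Z]) ‖e‖²`. Conditioning on the first `k`
draws and inducting on `k` gives the bound.
-/

open Matrix

/-- `Mp` is the Moore–Penrose pseudoinverse of `M` (the four Penrose conditions,
which characterize it uniquely). -/
def IsMoorePenrose {k l : Type*} [Fintype k] [Fintype l]
    (M : Matrix k l ℝ) (Mp : Matrix l k ℝ) : Prop :=
  M * Mp * M = M ∧ Mp * M * Mp = Mp ∧ (M * Mp)ᵀ = M * Mp ∧ (Mp * M)ᵀ = Mp * M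

/-- The square root of a positive semidefinite matrix, as `Matrix.PosSemidef.sqrt` was
defined in the older Mathlib (removed since in favour of `CFC.sqrt`). -/
noncomputable def Matrix.PosSemidef.sqrt {n : Type*} [Fintype n] [DecidableEq n]
    {A : Matrix n n ℝ} (hA : A.PosSemidef) : Matrix n n ℝ :=
  hA.1.eigenvectorUnitary.1 * diagonal ((↑) ∘ Real.sqrt ∘ hA.1.eigenvalues) *
    (star hA.1.eigenvectorUnitary : Matrix n n ℝ)

/-- The smallest nonzero eigenvalue of a square real matrix
(with junk value `sInf ∅ = 0` if every eigenvalue is zero). -/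
noncomputable def lamMinPos {n : ℕ} (M : Matrix (Fin n) (Fin n) ℝ) : ℝ :=
  sInf {μ : ℝ | μ ≠ 0 ∧ ∃ v : Fin n → ℝ, v ≠ 0 ∧ M *ᵥ v = μ • v}

/-- The trajectory of an iterative method: `traj step x0 k ω` is the `k`-th iterate
obtained from `x0` using the random draws `ω 0, …, ω (k-1)`. -/
def traj {V I : Type*} (step : I → V → V) (x0 : V) : (k : ℕ) → (Fin k → I) → V
  | 0, _ => x0
  | k + 1, ω => step (ω (Fin.last k)) (traj step x0 k (Fin.init ω))

section LinearAlgebra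

variable {ι : Type*} [Fintype ι]

theorem Matrix.dotProduct_self_nonneg (v : ι → ℝ) : 0 ≤ v ⬝ᵥ v := by
  simpa using dotProduct_star_self_nonneg v

theorem Matrix.dotProduct_self_pos {v : ι → ℝ} (hv : v ≠ 0) : 0 < v ⬝ᵥ v := by
  simpa using dotProduct_star_self_pos_iff.2 hv

theorem Matrix.mulVec_add_smul_of_mulVec_eq_zero {κ : Type*} {M : Matrix κ ι ℝ} {z : ι → ℝ}
    (hz : M *ᵥ z = 0) (p : ι → ℝ) (t : ℝ) : M *ᵥ (p + t • z) = M *ᵥ p := by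
  rw [mulVec_add, mulVec_smul, hz, smul_zero, add_zero]

variable {B R Z : Matrix ι ι ℝ}

theorem Matrix.IsSymm.mulVec_dotProduct (hB : B.IsSymm) (a c : ι → ℝ) :
    B *ᵥ a ⬝ᵥ c = a ⬝ᵥ B *ᵥ c := by
  rw [dotProduct_mulVec, ← mulVec_transpose, hB.eq, dotProduct_comm]

theorem Matrix.IsSymm.add_dotProduct_mulVec_add (hB : B.IsSymm) (a c : ι → ℝ) :
    (a + c) ⬝ᵥ B *ᵥ (a + c) = a ⬝ᵥ B *ᵥ a + 2 * (a ⬝ᵥ B *ᵥ c) + c ⬝ᵥ B *ᵥ c := by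
  rw [mulVec_add, add_dotProduct, dotProduct_add, dotProduct_add, dotProduct_comm c (B *ᵥ a),
    hB.mulVec_dotProduct]
  ring

theorem Matrix.IsSymm.mulVec_dotProduct_mulVec_self (hR : R.IsSymm) (hRR : R * R = B)
    (v : ι → ℝ) : R *ᵥ v ⬝ᵥ R *ᵥ v = v ⬝ᵥ B *ᵥ v := by
  rw [hR.mulVec_dotProduct, mulVec_mulVec, hRR]

theorem Matrix.PosSemidef.dotProduct_mulVec_eq_zero_of_isMinOn (hB : B.PosSemidef)
    {L : Set (ι → ℝ)} {x p z : ι → ℝ} (hmin : IsMinOn (fun y ↦ (y - x) ⬝ᵥ B *ᵥ (y - x)) L p)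
    (hz : ∀ t : ℝ, p + t • z ∈ L) : (p - x) ⬝ᵥ B *ᵥ z = 0 := by
  have hBs : B.IsSymm := isHermitian_iff_isSymm.1 hB.isHermitian
  have hdiscrim : discrim (z ⬝ᵥ B *ᵥ z) (2 * ((p - x) ⬝ᵥ B *ᵥ z)) 0 ≤ 0 := by
    refine discrim_le_zero fun t ↦ ?_
    have h := isMinOn_iff.1 hmin _ (hz t)
    rw [show p + t • z - x = (p - x) + t • z by abel, hBs.add_dotProduct_mulVec_add] at h
    simp only [mulVec_smul, dotProduct_smul, smul_dotProduct, smul_eq_mul] at h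
    nlinarith
  rw [discrim] at hdiscrim
  nlinarith [sq_nonneg ((p - x) ⬝ᵥ B *ᵥ z)]

namespace Matrix.PosSemidef

variable [DecidableEq ι] {A : Matrix ι ι ℝ}

theorem isSymm_sqrt (hA : A.PosSemidef) : hA.sqrt.IsSymm := by
  rw [IsSymm, ← conjTranspose_eq_transpose_of_trivial, sqrt, star_eq_conjTranspose]
  exact isHermitian_mul_mul_conjTranspose _ (isHermitian_diagonal _)

theorem sqrt_mul_self (hA : A.PosSemidef) : hA.sqrt * hA.sqrt = A := by
  set U : Matrix ι ι ℝ := hA.1.eigenvectorUnitary.1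
  set D : Matrix ι ι ℝ := diagonal ((↑) ∘ Real.sqrt ∘ hA.1.eigenvalues)
  have hU : star U * U = 1 := Unitary.star_mul_self_of_mem hA.1.eigenvectorUnitary.2
  conv_rhs => rw [hA.1.spectral_theorem, Unitary.conjStarAlgAut_apply]
  calc hA.sqrt * hA.sqrt = U * (D * (star U * U) * D) * star U := by
        simp only [sqrt, U, D, Matrix.mul_assoc]
    _ = _ := by
      rw [hU, Matrix.mul_one, diagonal_mul_diagonal]
      congr 3
      ext i
      simp [Real.mul_self_sqrt (hA.eigenvalues_nonneg i)]

end Matrix.PosSemidef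

theorem Matrix.PosDef.isUnit_det_sqrt [DecidableEq ι] (hB : B.PosDef) :
    IsUnit hB.posSemidef.sqrt.det := by
  have h : hB.posSemidef.sqrt.det * hB.posSemidef.sqrt.det = B.det := by
    rw [← det_mul, hB.posSemidef.sqrt_mul_self]
  exact isUnit_of_mul_isUnit_left (h ▸ hB.det_pos.ne'.isUnit)

theorem Matrix.isStarProjection_iff_transpose :
    IsStarProjection Z ↔ Z * Z = Z ∧ Zᵀ = Z := by
  rw [isStarProjection_iff', star_eq_conjTranspose, conjTranspose_eq_transpose_of_trivial]

namespace IsStarProjection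

theorem isSymm (hZ : IsStarProjection Z) : Z.IsSymm :=
  (isStarProjection_iff_transpose.1 hZ).2

theorem posSemidef (hZ : IsStarProjection Z) : Z.PosSemidef := by
  obtain ⟨hZZ, hZs⟩ := isStarProjection_iff_transpose.1 hZ
  simpa [conjTranspose_eq_transpose_of_trivial, hZs, hZZ] using
    posSemidef_conjTranspose_mul_self Z

theorem dotProduct_mulVec_eq (hZ : IsStarProjection Z) (v : ι → ℝ) :
    v ⬝ᵥ Z *ᵥ v = Z *ᵥ v ⬝ᵥ Z *ᵥ v := by
  rw [hZ.isSymm.mulVec_dotProduct, mulVec_mulVec, hZ.isIdempotentElem.eq]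

theorem dotProduct_mulVec_le (hZ : IsStarProjection Z) (v : ι → ℝ) :
    v ⬝ᵥ Z *ᵥ v ≤ v ⬝ᵥ v := by
  classical
  have h := hZ.one_sub.dotProduct_mulVec_eq v
  rw [sub_mulVec, one_mulVec, dotProduct_sub] at h
  linarith [dotProduct_self_nonneg (v - Z *ᵥ v)]

theorem dotProduct_mulVec_le_of_mulVec_eq_zero (hZ : IsStarProjection Z) {u : ι → ℝ}
    (hu : Z *ᵥ u = 0) (v : ι → ℝ) : v ⬝ᵥ Z *ᵥ v ≤ (v - u) ⬝ᵥ (v - u) := by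
  have hZv : Z *ᵥ v = Z *ᵥ (v - u) := by rw [mulVec_sub, hu, sub_zero]
  rw [hZ.dotProduct_mulVec_eq, hZv, ← hZ.dotProduct_mulVec_eq]
  exact hZ.dotProduct_mulVec_le _

theorem dotProduct_mulVec_sub_le (hZ : IsStarProjection Z) (hR : R.IsSymm) (hRR : R * R = B)
    {x xp xstar : ι → ℝ} (horth : (xp - x) ⬝ᵥ B *ᵥ (xp - xstar) = 0)
    (hker : Z *ᵥ R *ᵥ (xp - xstar) = 0) :
    (xp - xstar) ⬝ᵥ B *ᵥ (xp - xstar) ≤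
      (x - xstar) ⬝ᵥ B *ᵥ (x - xstar) - R *ᵥ (x - xstar) ⬝ᵥ Z *ᵥ R *ᵥ (x - xstar) := by
  have hB : B.IsSymm := by rw [← hRR, IsSymm, transpose_mul, hR.eq]
  have horth' : (x - xp) ⬝ᵥ B *ᵥ (xp - xstar) = 0 := by
    rw [← neg_sub xp x, neg_dotProduct, horth, neg_zero]
  have hpyth : (x - xstar) ⬝ᵥ B *ᵥ (x - xstar) =
      (x - xp) ⬝ᵥ B *ᵥ (x - xp) + (xp - xstar) ⬝ᵥ B *ᵥ (xp - xstar) := by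
    rw [← sub_add_sub_cancel x xp xstar, hB.add_dotProduct_mulVec_add, horth']
    ring
  have hproj := hZ.dotProduct_mulVec_le_of_mulVec_eq_zero hker (R *ᵥ (x - xstar))
  rw [← mulVec_sub, sub_sub_sub_cancel_right, hR.mulVec_dotProduct_mulVec_self hRR] at hproj
  linarith

end IsStarProjection

end LinearAlgebra

section Expectation

variable {ι ν : Type*} [Fintype ι] [Fintype ν] {w : ν → ℝ} {Z : ν → Matrix ι ι ℝ}

theorem dotProduct_sum_smul_mulVec (w : ν → ℝ) (Z : ν → Matrix ι ι ℝ) (v : ι → ℝ) :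
    v ⬝ᵥ (∑ i, w i • Z i) *ᵥ v = ∑ i, w i * (v ⬝ᵥ Z i *ᵥ v) := by
  simp only [sum_mulVec, smul_mulVec, dotProduct_sum, dotProduct_smul, smul_eq_mul]

theorem posSemidef_sum_smul (hw : ∀ i, 0 ≤ w i) (hZ : ∀ i, IsStarProjection (Z i)) :
    (∑ i, w i • Z i).PosSemidef :=
  posSemidef_sum _ fun i _ ↦ (hZ i).posSemidef.smul (hw i)

theorem dotProduct_sum_smul_mulVec_le (hw : ∀ i, 0 ≤ w i) (hw1 : ∑ i, w i = 1)
    (hZ : ∀ i, IsStarProjection (Z i)) (v : ι → ℝ) : v ⬝ᵥ (∑ i, w i • Z i) *ᵥ v ≤ v ⬝ᵥ v := by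
  rw [dotProduct_sum_smul_mulVec]
  calc ∑ i, w i * (v ⬝ᵥ Z i *ᵥ v) ≤ ∑ i, w i * (v ⬝ᵥ v) :=
        Finset.sum_le_sum fun i _ ↦
          mul_le_mul_of_nonneg_left ((hZ i).dotProduct_mulVec_le v) (hw i)
    _ = v ⬝ᵥ v := by rw [← Finset.sum_mul, hw1, one_mul]

end Expectation

namespace IsMoorePenrose

variable {ι κ : Type*} [Fintype ι] [Fintype κ] {M : Matrix κ ι ℝ} {X Y : Matrix ι κ ℝ}

theorem unique (hX : IsMoorePenrose M X) (hY : IsMoorePenrose M Y) : X = Y := by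
  obtain ⟨hX1, hX2, hX3, hX4⟩ := hX
  obtain ⟨hY1, hY2, hY3, hY4⟩ := hY
  have hMX : M * X = M * Y :=
    calc M * X = (M * Y * M * X)ᵀ := by rw [hY1, hX3]
      _ = (M * X)ᵀ * (M * Y)ᵀ := by rw [Matrix.mul_assoc (M * Y), transpose_mul]
      _ = M * Y := by rw [hX3, hY3, ← Matrix.mul_assoc, hX1]
  have hXM : X * M = Y * M :=
    calc X * M = (X * (M * Y * M))ᵀ := by rw [hY1, hX4]
      _ = (Y * M)ᵀ * (X * M)ᵀ := by
          rw [show X * (M * Y * M) = X * M * (Y * M) by simp only [Matrix.mul_assoc],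
            transpose_mul]
      _ = Y * M := by rw [hX4, hY4, Matrix.mul_assoc, ← Matrix.mul_assoc M, hX1]
  rw [← hX2, Matrix.mul_assoc, hMX, ← Matrix.mul_assoc, hXM, hY2]

theorem transpose (hX : IsMoorePenrose M X) : IsMoorePenrose Mᵀ Xᵀ := by
  obtain ⟨h1, h2, h3, h4⟩ := hX
  refine ⟨?_, ?_, ?_, ?_⟩
  · rw [← transpose_mul, ← transpose_mul, ← Matrix.mul_assoc, h1]
  · rw [← transpose_mul, ← transpose_mul, ← Matrix.mul_assoc, h2]
  · rw [← transpose_mul, transpose_transpose, h4]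
  · rw [← transpose_mul, transpose_transpose, h3]

theorem transpose_eq {M X : Matrix ι ι ℝ} (hM : Mᵀ = M) (hX : IsMoorePenrose M X) : Xᵀ = X :=
  (hM ▸ hX.transpose).unique hX

theorem isStarProjection_mul (hX : IsMoorePenrose M X) : IsStarProjection (X * M) :=
  isStarProjection_iff_transpose.2 ⟨by rw [← Matrix.mul_assoc, hX.2.1], hX.2.2.2⟩

theorem isStarProjection_transpose_mul_mul {W : Matrix κ ι ℝ} {N : Matrix κ κ ℝ}
    (hN : IsMoorePenrose (W * Wᵀ) N) : IsStarProjection (Wᵀ * N * W) := by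
  have hNs : Nᵀ = N := hN.transpose_eq (by rw [transpose_mul, transpose_transpose])
  refine isStarProjection_iff_transpose.2 ⟨?_, ?_⟩
  · calc Wᵀ * N * W * (Wᵀ * N * W) = Wᵀ * (N * (W * Wᵀ) * N) * W := by
          simp only [Matrix.mul_assoc]
      _ = Wᵀ * N * W := by rw [hN.2.1]
  · rw [transpose_mul, transpose_mul, transpose_transpose, hNs, Matrix.mul_assoc]

end IsMoorePenrose

section LamMinPos

variable {n : ℕ} {M : Matrix (Fin n) (Fin n) ℝ}

theorem Matrix.PosSemidef.nonneg_of_mulVec_eq_smul (hM : M.PosSemidef) {μ : ℝ}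
    {v : Fin n → ℝ} (hv : v ≠ 0) (hMv : M *ᵥ v = μ • v) : 0 ≤ μ := by
  have h := hM.dotProduct_mulVec_nonneg v
  rw [star_trivial, hMv, dotProduct_smul, smul_eq_mul] at h
  exact nonneg_of_mul_nonneg_left h (dotProduct_self_pos hv)

theorem lamMinPos_le (hM : M.PosSemidef) {μ : ℝ} (hμ : μ ≠ 0) {v : Fin n → ℝ} (hv : v ≠ 0)
    (hMv : M *ᵥ v = μ • v) : lamMinPos M ≤ μ :=
  csInf_le ⟨0, fun _ ⟨_, _, hv, hMv⟩ ↦ hM.nonneg_of_mulVec_eq_smul hv hMv⟩ ⟨hμ, v, hv, hMv⟩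

theorem lamMinPos_le_one (hM : M.PosSemidef) (hle : ∀ v, v ⬝ᵥ M *ᵥ v ≤ v ⬝ᵥ v) :
    lamMinPos M ≤ 1 := by
  unfold lamMinPos
  rcases Set.eq_empty_or_nonempty {μ : ℝ | μ ≠ 0 ∧ ∃ v : Fin n → ℝ, v ≠ 0 ∧ M *ᵥ v = μ • v}
    with h | ⟨μ, hμ, v, hv, hMv⟩
  · rw [h, Real.sInf_empty]
    exact zero_le_one
  · have hμv := hle v
    rw [hMv, dotProduct_smul, smul_eq_mul] at hμv
    exact (lamMinPos_le hM hμ hv hMv).trans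
      (le_of_mul_le_mul_right (by linarith) (dotProduct_self_pos hv))

theorem lamMinPos_mul_dotProduct_self_le (hM : M.PosSemidef) {y : Fin n → ℝ}
    (hy : ∀ v, M *ᵥ v = 0 → y ⬝ᵥ v = 0) : lamMinPos M * (y ⬝ᵥ y) ≤ y ⬝ᵥ M *ᵥ y := by
  set b := hM.isHermitian.eigenvectorBasis
  set μ := hM.isHermitian.eigenvalues
  set c : Fin n → ℝ := fun i ↦ y ⬝ᵥ ⇑(b i)
  have hMb (i : Fin n) : M *ᵥ ⇑(b i) = μ i • ⇑(b i) := hM.isHermitian.mulVec_eigenvectorBasis i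
  have hy_eq : y = ∑ i, c i • ⇑(b i) := by
    have := congrArg (⇑) (b.sum_repr' (WithLp.toLp 2 y))
    simpa [c, EuclideanSpace.inner_eq_star_dotProduct] using this.symm
  have hquad : y ⬝ᵥ M *ᵥ y = ∑ i, μ i * (c i * c i) := by
    conv_lhs => arg 2; rw [hy_eq]
    simp only [mulVec_sum, mulVec_smul, hMb, smul_smul, dotProduct_sum, dotProduct_smul,
      smul_eq_mul]
    exact Finset.sum_congr rfl fun i _ ↦ by ring
  have hnorm : y ⬝ᵥ y = ∑ i, c i * c i := by
    conv_lhs => arg 2; rw [hy_eq]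
    simp only [dotProduct_sum, dotProduct_smul, smul_eq_mul]
    rfl
  rw [hquad, hnorm, Finset.mul_sum]
  refine Finset.sum_le_sum fun i _ ↦ ?_
  by_cases hμ : μ i = 0
  · have hc : c i = 0 := hy _ (by rw [hMb, hμ, zero_smul])
    simp [hμ, hc]
  · have hb : ⇑(b i) ≠ 0 := (WithLp.ofLp_eq_zero 2).ne.2 (b.orthonormal.ne_zero i)
    exact mul_le_mul_of_nonneg_right (lamMinPos_le hM hμ hb (hMb i)) (mul_self_nonneg _)

theorem sum_mul_le_one_sub_lamMinPos_mul {ν : Type*} [Fintype ν] {w : ν → ℝ}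
    (hw : ∀ i, 0 ≤ w i) (hw1 : ∑ i, w i = 1) {Z : ν → Matrix (Fin n) (Fin n) ℝ}
    (hZ : (∑ i, w i • Z i).PosSemidef) {e : Fin n → ℝ}
    (he : ∀ v, (∑ i, w i • Z i) *ᵥ v = 0 → e ⬝ᵥ v = 0) {q : ℝ} (hq : e ⬝ᵥ e = q) {a : ν → ℝ}
    (ha : ∀ i, a i ≤ q - e ⬝ᵥ Z i *ᵥ e) :
    ∑ i, w i * a i ≤ (1 - lamMinPos (∑ i, w i • Z i)) * q := by
  subst hq
  have hspec := lamMinPos_mul_dotProduct_self_le hZ he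
  rw [dotProduct_sum_smul_mulVec] at hspec
  calc ∑ i, w i * a i ≤ ∑ i, w i * (e ⬝ᵥ e - e ⬝ᵥ Z i *ᵥ e) :=
        Finset.sum_le_sum fun i _ ↦ mul_le_mul_of_nonneg_left (ha i) (hw i)
    _ = e ⬝ᵥ e - ∑ i, w i * (e ⬝ᵥ Z i *ᵥ e) := by
        simp only [mul_sub, Finset.sum_sub_distrib, ← Finset.sum_mul, hw1, one_mul]
    _ ≤ (1 - lamMinPos (∑ i, w i • Z i)) * (e ⬝ᵥ e) := by
        rw [sub_mul, one_mul]
        linarith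

end LamMinPos

section Trajectory

variable {V I : Type*} (step : I → V → V) (x0 : V)

theorem traj_invariant {Inv : V → Prop} (h0 : Inv x0) (hInv : ∀ i x, Inv x → Inv (step i x)) :
    ∀ k ω, Inv (traj step x0 k ω)
  | 0, _ => h0
  | k + 1, _ => hInv _ _ (traj_invariant h0 hInv k _)

variable [Fintype I] (w : I → ℝ) (F : V → ℝ)

theorem sum_prod_mul_traj_succ (k : ℕ) :
    ∑ ω : Fin (k + 1) → I, (∏ j, w (ω j)) * F (traj step x0 (k + 1) ω) =
      ∑ ω : Fin k → I, (∏ j, w (ω j)) * ∑ i, w i * F (step i (traj step x0 k ω)) := by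
  rw [← (Fin.snocEquiv fun _ ↦ I).sum_comp, Fintype.sum_prod_type_right]
  refine Finset.sum_congr rfl fun ω _ ↦ ?_
  have hinit (i : I) : Fin.init ((Fin.snocEquiv fun _ ↦ I) (i, ω)) = ω := by
    ext j
    simp [Fin.init]
  simp only [traj, hinit, Fin.snocEquiv_apply, Fin.snoc_last, Fin.prod_univ_castSucc,
    Fin.snoc_castSucc, Finset.mul_sum]
  exact Finset.sum_congr rfl fun i _ ↦ by ring

theorem sum_prod_mul_traj_le (hw : ∀ i, 0 ≤ w i) {c : ℝ} (hc : 0 ≤ c) {Inv : V → Prop}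
    (h0 : Inv x0) (hInv : ∀ i x, Inv x → Inv (step i x))
    (hF : ∀ x, Inv x → ∑ i, w i * F (step i x) ≤ c * F x) (k : ℕ) :
    ∑ ω : Fin k → I, (∏ j, w (ω j)) * F (traj step x0 k ω) ≤ c ^ k * F x0 := by
  induction k with
  | zero => simp [traj]
  | succ k ih =>
    rw [sum_prod_mul_traj_succ]
    calc ∑ ω : Fin k → I, (∏ j, w (ω j)) * ∑ i, w i * F (step i (traj step x0 k ω))
        ≤ ∑ ω : Fin k → I, (∏ j, w (ω j)) * (c * F (traj step x0 k ω)) :=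
          Finset.sum_le_sum fun ω _ ↦ mul_le_mul_of_nonneg_left
            (hF _ (traj_invariant step x0 h0 hInv k ω)) (Finset.prod_nonneg fun j _ ↦ hw _)
      _ = c * ∑ ω : Fin k → I, (∏ j, w (ω j)) * F (traj step x0 k ω) := by
          rw [Finset.mul_sum]
          exact Finset.sum_congr rfl fun ω _ ↦ by ring
      _ ≤ c ^ (k + 1) * F x0 := by
          rw [pow_succ', mul_assoc]
          exact mul_le_mul_of_nonneg_left ih hc

end Trajectory

theorem least_norm_solution_sub_dotProduct_mulVec_eq_zero {ι κ : Type*} [Fintype ι]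
    {A : Matrix κ ι ℝ} {b : κ → ℝ} {B : Matrix ι ι ℝ} (hB : B.PosSemidef) {x0 xstar : ι → ℝ}
    (hxstar : A *ᵥ xstar = b)
    (hmin : ∀ y, A *ᵥ y = b → (xstar - x0) ⬝ᵥ B *ᵥ (xstar - x0) ≤ (y - x0) ⬝ᵥ B *ᵥ (y - x0))
    {z : ι → ℝ} (hz : A *ᵥ z = 0) : (x0 - xstar) ⬝ᵥ B *ᵥ z = 0 := by
  have h := hB.dotProduct_mulVec_eq_zero_of_isMinOn (L := {y | A *ᵥ y = b})
    (isMinOn_iff.2 hmin) fun t ↦ (mulVec_add_smul_of_mulVec_eq_zero hz _ t).trans hxstar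
  rw [← neg_sub, neg_dotProduct, h, neg_zero]

section SketchAndProject

variable {ι κ σ τ : Type*} [Fintype ι] [Fintype κ]
  {A : Matrix κ ι ℝ} {b : κ → ℝ} {S : Matrix σ κ ℝ} {Q : Matrix τ κ ℝ}
  {B Bih R P : Matrix ι ι ℝ} {x xp xstar : ι → ℝ}

theorem Matrix.mul_mulVec_sub_eq_zero {C : Matrix σ κ ℝ} (hx : (C * A) *ᵥ x = C *ᵥ b)
    (hxstar : A *ᵥ xstar = b) : (C * A) *ᵥ (x - xstar) = 0 := by
  rw [mulVec_sub, hx, ← mulVec_mulVec, hxstar, sub_self]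

def IsSketchStep (B : Matrix ι ι ℝ) (S : Matrix σ κ ℝ) (Q : Matrix τ κ ℝ) (A : Matrix κ ι ℝ)
    (b : κ → ℝ) (x xp : ι → ℝ) : Prop :=
  (S * A) *ᵥ xp = S *ᵥ b ∧ (Q * A) *ᵥ xp = Q *ᵥ b ∧
    ∀ y, (S * A) *ᵥ y = S *ᵥ b → (Q * A) *ᵥ y = Q *ᵥ b →
      (xp - x) ⬝ᵥ B *ᵥ (xp - x) ≤ (y - x) ⬝ᵥ B *ᵥ (y - x)

theorem IsSketchStep.sub_dotProduct_mulVec_eq_zero (hB : B.PosSemidef)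
    (hstep : IsSketchStep B S Q A b x xp) {z : ι → ℝ} (hS : (S * A) *ᵥ z = 0)
    (hQ : (Q * A) *ᵥ z = 0) : (xp - x) ⬝ᵥ B *ᵥ z = 0 := by
  obtain ⟨hSxp, hQxp, hmin⟩ := hstep
  exact hB.dotProduct_mulVec_eq_zero_of_isMinOn
    (L := {y | (S * A) *ᵥ y = S *ᵥ b ∧ (Q * A) *ᵥ y = Q *ᵥ b})
    (isMinOn_iff.2 fun y hy ↦ hmin y hy.1 hy.2) fun t ↦
      ⟨(mulVec_add_smul_of_mulVec_eq_zero hS _ t).trans hSxp,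
        (mulVec_add_smul_of_mulVec_eq_zero hQ _ t).trans hQxp⟩

theorem IsSketchStep.sub_dotProduct_mulVec_ker_eq_zero (hB : B.PosSemidef)
    (hstep : IsSketchStep B S Q A b x xp)
    (hx : ∀ z, A *ᵥ z = 0 → (x - xstar) ⬝ᵥ B *ᵥ z = 0) {z : ι → ℝ} (hz : A *ᵥ z = 0) :
    (xp - xstar) ⬝ᵥ B *ᵥ z = 0 := by
  have hxp := hstep.sub_dotProduct_mulVec_eq_zero hB (z := z)
    (by rw [← mulVec_mulVec, hz, mulVec_zero]) (by rw [← mulVec_mulVec, hz, mulVec_zero])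
  rw [← sub_add_sub_cancel xp x xstar, add_dotProduct, hxp, hx z hz, add_zero]

theorem isStarProjection_sketch [Fintype σ] {N : Matrix σ σ ℝ} (hP : IsStarProjection P)
    (hBih : Bih.IsSymm) (hN : IsMoorePenrose (S * A * Bih * P * Bih * Aᵀ * Sᵀ) N) :
    IsStarProjection (P * Bih * Aᵀ * Sᵀ * N * (S * A * Bih * P)) := by
  obtain ⟨hPP, hPs⟩ := isStarProjection_iff_transpose.1 hP
  have hWt : (S * A * Bih * P)ᵀ = P * Bih * Aᵀ * Sᵀ := by
    simp only [transpose_mul, hPs, hBih.eq, Matrix.mul_assoc]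
  have hWWt : S * A * Bih * P * (S * A * Bih * P)ᵀ = S * A * Bih * P * Bih * Aᵀ * Sᵀ := by
    rw [hWt]
    simp only [← Matrix.mul_assoc]
    rw [Matrix.mul_assoc (S * A * Bih) P P, hPP]
  rw [← hWt]
  exact IsMoorePenrose.isStarProjection_transpose_mul_mul (hWWt ▸ hN)

theorem mulVec_mulVec_eq_self_of_mulVec_eq_zero [DecidableEq ι] [Fintype τ]
    {N₁ : Matrix ι τ ℝ} (hP : P = 1 - N₁ * (Q * A * Bih)) (hBihR : Bih * R = 1) {v : ι → ℝ}
    (hQ : (Q * A) *ᵥ v = 0) : P *ᵥ R *ᵥ v = R *ᵥ v := by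
  rw [hP, sub_mulVec, one_mulVec, ← mulVec_mulVec, mulVec_mulVec _ _ R, Matrix.mul_assoc, hBihR,
    Matrix.mul_one, hQ, mulVec_zero, sub_zero]

theorem sketch_mulVec_mulVec_eq_zero [DecidableEq ι] [Fintype σ] [Fintype τ]
    {N₁ : Matrix ι τ ℝ} {N₂ : Matrix σ σ ℝ}
    (hP : P = 1 - N₁ * (Q * A * Bih)) (hBihR : Bih * R = 1) {v : ι → ℝ}
    (hQ : (Q * A) *ᵥ v = 0) (hS : (S * A) *ᵥ v = 0) :
    (P * Bih * Aᵀ * Sᵀ * N₂ * (S * A * Bih * P)) *ᵥ R *ᵥ v = 0 := by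
  have hWR : (S * A * Bih * P) *ᵥ R *ᵥ v = 0 := by
    rw [← mulVec_mulVec, mulVec_mulVec_eq_self_of_mulVec_eq_zero hP hBihR hQ, mulVec_mulVec,
      Matrix.mul_assoc, hBihR, Matrix.mul_one, hS]
  rw [← mulVec_mulVec, hWR, mulVec_zero]

theorem IsSketchStep.dotProduct_mulVec_sub_le {Z : Matrix ι ι ℝ} (hB : B.PosSemidef)
    (hR : R.IsSymm) (hRR : R * R = B) (hZ : IsStarProjection Z)
    (hZker : ∀ v, (Q * A) *ᵥ v = 0 → (S * A) *ᵥ v = 0 → Z *ᵥ R *ᵥ v = 0)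
    (hxstar : A *ᵥ xstar = b) (hstep : IsSketchStep B S Q A b x xp) :
    (xp - xstar) ⬝ᵥ B *ᵥ (xp - xstar) ≤
      (x - xstar) ⬝ᵥ B *ᵥ (x - xstar) - R *ᵥ (x - xstar) ⬝ᵥ Z *ᵥ R *ᵥ (x - xstar) := by
  have hS := mul_mulVec_sub_eq_zero hstep.1 hxstar
  have hQ := mul_mulVec_sub_eq_zero hstep.2.1 hxstar
  exact hZ.dotProduct_mulVec_sub_le hR hRR (hstep.sub_dotProduct_mulVec_eq_zero hB hS hQ)
    (hZker _ hQ hS)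

theorem whitened_error_dotProduct_eq_zero [DecidableEq ι] [Fintype τ] {N₁ : Matrix ι τ ℝ}
    (hP : P = 1 - N₁ * (Q * A * Bih)) (hPs : P.IsSymm) (hR : R.IsSymm)
    (hBBih : B * Bih = R) (hBihR : Bih * R = 1) (hx : (Q * A) *ᵥ x = Q *ᵥ b)
    (hxstar : A *ᵥ xstar = b) (horth : ∀ z, A *ᵥ z = 0 → (x - xstar) ⬝ᵥ B *ᵥ z = 0)
    {v : ι → ℝ} (hv : (A * Bih * P) *ᵥ v = 0) : R *ᵥ (x - xstar) ⬝ᵥ v = 0 := by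
  have hQ := mul_mulVec_sub_eq_zero hx hxstar
  calc R *ᵥ (x - xstar) ⬝ᵥ v = (x - xstar) ⬝ᵥ B *ᵥ Bih *ᵥ P *ᵥ v := by
        rw [← mulVec_mulVec_eq_self_of_mulVec_eq_zero hP hBihR hQ, hPs.mulVec_dotProduct,
          hR.mulVec_dotProduct, mulVec_mulVec _ B, hBBih]
    _ = 0 := horth _ (by rw [mulVec_mulVec, mulVec_mulVec, hv])

end SketchAndProject

theorem stmt_6_general {m n d l N : ℕ}
    (A : Matrix (Fin m) (Fin n) ℝ) (b : Fin m → ℝ)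
    (B : Matrix (Fin n) (Fin n) ℝ) (hB : B.PosDef)
    (Q : Matrix (Fin d) (Fin m) ℝ)
    (Bih : Matrix (Fin n) (Fin n) ℝ) (hBih : Bih = (hB.posSemidef.sqrt)⁻¹)
    (N1 : Matrix (Fin n) (Fin d) ℝ) (hN1 : IsMoorePenrose (Q * A * Bih) N1)
    (P : Matrix (Fin n) (Fin n) ℝ) (hP : P = 1 - N1 * (Q * A * Bih))
    -- the finitely supported distribution `D` of sketching matrices
    (w : Fin N → ℝ) (hw : ∀ i, 0 ≤ w i) (hw1 : ∑ i, w i = 1)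
    (Smat : Fin N → Matrix (Fin l) (Fin m) ℝ)
    -- `N2 i = (S_i A B^{-1/2} P B^{-1/2} Aᵀ S_iᵀ)†` and the projectors `Z i`
    (N2 : Fin N → Matrix (Fin l) (Fin l) ℝ)
    (hN2 : ∀ i, IsMoorePenrose (Smat i * A * Bih * P * Bih * Aᵀ * (Smat i)ᵀ) (N2 i))
    (Z : Fin N → Matrix (Fin n) (Fin n) ℝ)
    (hZ : ∀ i, Z i = P * Bih * Aᵀ * (Smat i)ᵀ * N2 i * (Smat i * A * Bih * P))
    -- the expected projector `EZ = E[Z]`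
    (EZ : Matrix (Fin n) (Fin n) ℝ) (hEZ : EZ = ∑ i, w i • Z i)
    -- exactness condition: `null(E[Z]) = null(A B^{-1/2} P)`
    (hexact : ∀ v : Fin n → ℝ, EZ *ᵥ v = 0 ↔ (A * Bih * P) *ᵥ v = 0)
    -- the initial iterate satisfies `Q A x0 = Q b`
    (x0 : Fin n → ℝ) (hx0 : (Q * A) *ᵥ x0 = Q *ᵥ b)
    -- `x*` is the minimizer of `‖x - x0‖_B` over `{x : Ax = b}`
    (xstar : Fin n → ℝ) (hxstar_sol : A *ᵥ xstar = b)
    (hxstar_min : ∀ y : Fin n → ℝ, A *ᵥ y = b →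
      (xstar - x0) ⬝ᵥ (B *ᵥ (xstar - x0)) ≤ (y - x0) ⬝ᵥ (B *ᵥ (y - x0)))
    -- one step of the method: given an iterate satisfying the subspace constraint and
    -- a sketch index `i`, `step i x` minimizes `‖· - x‖_B` subject to both constraints
    (step : Fin N → (Fin n → ℝ) → (Fin n → ℝ))
    (hstep : ∀ i x, (Q * A) *ᵥ x = Q *ᵥ b →
      (Smat i * A) *ᵥ step i x = Smat i *ᵥ b ∧
      (Q * A) *ᵥ step i x = Q *ᵥ b ∧
      ∀ y : Fin n → ℝ, (Smat i * A) *ᵥ y = Smat i *ᵥ b → (Q * A) *ᵥ y = Q *ᵥ b →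
        (step i x - x) ⬝ᵥ (B *ᵥ (step i x - x)) ≤ (y - x) ⬝ᵥ (B *ᵥ (y - x))) :
    ∀ k : ℕ,
      ∑ ω : Fin k → Fin N, (∏ i, w (ω i)) *
          ((traj step x0 k ω - xstar) ⬝ᵥ (B *ᵥ (traj step x0 k ω - xstar))) ≤
        (1 - lamMinPos EZ) ^ k * ((x0 - xstar) ⬝ᵥ (B *ᵥ (x0 - xstar))) := by
  subst hEZ
  set R := hB.posSemidef.sqrt
  have hR : R.IsSymm := hB.posSemidef.isSymm_sqrt
  have hRR : R * R = B := hB.posSemidef.sqrt_mul_self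
  have hBihR : Bih * R = 1 := hBih ▸ nonsing_inv_mul _ hB.isUnit_det_sqrt
  have hBBih : B * Bih = R := by
    rw [← hRR, Matrix.mul_assoc, hBih, mul_nonsing_inv _ hB.isUnit_det_sqrt, Matrix.mul_one]
  have hPproj : IsStarProjection P := hP ▸ hN1.isStarProjection_mul.one_sub
  have hZproj (i : Fin N) : IsStarProjection (Z i) :=
    hZ i ▸ isStarProjection_sketch hPproj (hBih ▸ hR.inv) (hN2 i)
  have hlam := lamMinPos_le_one (posSemidef_sum_smul hw hZproj)
    (dotProduct_sum_smul_mulVec_le hw hw1 hZproj)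
  refine sum_prod_mul_traj_le step x0 w (fun x ↦ (x - xstar) ⬝ᵥ B *ᵥ (x - xstar)) hw
    (sub_nonneg.2 hlam)
    (Inv := fun x ↦ (Q * A) *ᵥ x = Q *ᵥ b ∧ ∀ z, A *ᵥ z = 0 → (x - xstar) ⬝ᵥ B *ᵥ z = 0)
    ⟨hx0, fun z ↦ least_norm_solution_sub_dotProduct_mulVec_eq_zero hB.posSemidef hxstar_sol
      hxstar_min⟩
    (fun i x hx ↦ ⟨(hstep i x hx.1).2.1, fun z ↦
      IsSketchStep.sub_dotProduct_mulVec_ker_eq_zero hB.posSemidef (hstep i x hx.1) hx.2⟩)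
    fun x hx ↦ sum_mul_le_one_sub_lamMinPos_mul hw hw1 (posSemidef_sum_smul hw hZproj)
      (fun v hv ↦ whitened_error_dotProduct_eq_zero hP hPproj.isSymm hR hBBih hBihR hx.1
        hxstar_sol hx.2 ((hexact v).1 hv))
      (hR.mulVec_dotProduct_mulVec_self hRR _) fun i ↦
        IsSketchStep.dotProduct_mulVec_sub_le hB.posSemidef hR hRR (hZproj i)
          (fun v hQ hS ↦ hZ i ▸ sketch_mulVec_mulVec_eq_zero hP hBihR hQ hS) hxstar_sol
          (hstep i x hx.1)

/-- convergence of subspace-constrained sketch-and-project.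
With a finitely supported distribution of sketching matrices (weights `w i` on
matrices `Smat i`), per-sketch projectors `Z i`, expected projector `EZ`, and the
exactness condition `null(EZ) = null(A B^{−1/2} P)`, the iterates satisfy
`E‖x^k − x*‖_B² ≤ (1 − λmin⁺(EZ))^k ‖x^0 − x*‖_B²`, where the expectation is the
weighted sum over all sequences of draws. -/
theorem stmt_6 {m n d l N : ℕ}
    (A : Matrix (Fin m) (Fin n) ℝ) (b : Fin m → ℝ)
    (hconsistent : ∃ x, A *ᵥ x = b)
    (B : Matrix (Fin n) (Fin n) ℝ) (hB : B.PosDef)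
    (Q : Matrix (Fin d) (Fin m) ℝ)
    (Bih : Matrix (Fin n) (Fin n) ℝ) (hBih : Bih = (hB.posSemidef.sqrt)⁻¹)
    (N1 : Matrix (Fin n) (Fin d) ℝ) (hN1 : IsMoorePenrose (Q * A * Bih) N1)
    (P : Matrix (Fin n) (Fin n) ℝ) (hP : P = 1 - N1 * (Q * A * Bih))
    -- the finitely supported distribution `D` of sketching matrices
    (w : Fin N → ℝ) (hw : ∀ i, 0 ≤ w i) (hw1 : ∑ i, w i = 1)
    (Smat : Fin N → Matrix (Fin l) (Fin m) ℝ)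
    -- `N2 i = (S_i A B^{-1/2} P B^{-1/2} Aᵀ S_iᵀ)†` and the projectors `Z i`
    (N2 : Fin N → Matrix (Fin l) (Fin l) ℝ)
    (hN2 : ∀ i, IsMoorePenrose (Smat i * A * Bih * P * Bih * Aᵀ * (Smat i)ᵀ) (N2 i))
    (Z : Fin N → Matrix (Fin n) (Fin n) ℝ)
    (hZ : ∀ i, Z i = P * Bih * Aᵀ * (Smat i)ᵀ * N2 i * (Smat i * A * Bih * P))
    -- the expected projector `EZ = E[Z]`
    (EZ : Matrix (Fin n) (Fin n) ℝ) (hEZ : EZ = ∑ i, w i • Z i)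
    -- exactness condition: `null(E[Z]) = null(A B^{-1/2} P)`
    (hexact : ∀ v : Fin n → ℝ, EZ *ᵥ v = 0 ↔ (A * Bih * P) *ᵥ v = 0)
    -- the initial iterate satisfies `Q A x0 = Q b`
    (x0 : Fin n → ℝ) (hx0 : (Q * A) *ᵥ x0 = Q *ᵥ b)
    -- `x*` is the minimizer of `‖x - x0‖_B` over `{x : Ax = b}`
    (xstar : Fin n → ℝ) (hxstar_sol : A *ᵥ xstar = b)
    (hxstar_min : ∀ y : Fin n → ℝ, A *ᵥ y = b →
      (xstar - x0) ⬝ᵥ (B *ᵥ (xstar - x0)) ≤ (y - x0) ⬝ᵥ (B *ᵥ (y - x0)))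
    -- one step of the method: given an iterate satisfying the subspace constraint and
    -- a sketch index `i`, `step i x` minimizes `‖· - x‖_B` subject to both constraints
    (step : Fin N → (Fin n → ℝ) → (Fin n → ℝ))
    (hstep : ∀ i x, (Q * A) *ᵥ x = Q *ᵥ b →
      (Smat i * A) *ᵥ step i x = Smat i *ᵥ b ∧
      (Q * A) *ᵥ step i x = Q *ᵥ b ∧
      ∀ y : Fin n → ℝ, (Smat i * A) *ᵥ y = Smat i *ᵥ b → (Q * A) *ᵥ y = Q *ᵥ b →
        (step i x - x) ⬝ᵥ (B *ᵥ (step i x - x)) ≤ (y - x) ⬝ᵥ (B *ᵥ (y - x))) :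
    ∀ k : ℕ,
      ∑ ω : Fin k → Fin N, (∏ i, w (ω i)) *
          ((traj step x0 k ω - xstar) ⬝ᵥ (B *ᵥ (traj step x0 k ω - xstar))) ≤
        (1 - lamMinPos EZ) ^ k * ((x0 - xstar) ⬝ᵥ (B *ᵥ (x0 - xstar))) :=
  stmt_6_general A b B hB Q Bih hBih N1 hN1 P hP w hw hw1 Smat N2 hN2 Z hZ EZ hEZ hexact x0 hx0
    xstar hxstar_sol hxstar_min step hstep
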